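/- Let p, q > 0 and let t be a real number with |t| < π/2. Then ∫_0^∞ x^{p−1} e^{−q x} cos(q x tan t) dx = (Γ(p)/q^p) cos^p(t) cos(p t), where Γ is Euler's gamma function. -/

import Mathlib

open Real MeasureTheory

open Set Filter Topology
open Complex (I arg)
open scoped Complex

/-! The integral is the real part of `∫₀^∞ x^(p-1) e^(-z x) dx` at
`z = q (1 + i tan t) = (q / cos t) e^(i t)`. For real `z > 0` this integral equals `z^(-p) Γ(p)`;
both sides are holomorphic in `z` on the right half-plane, so the identity theorem extends the
formula there, and taking real parts with `|z| = q / cos t`, `arg z = t` gives the claim. -/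

theorem norm_ofReal_cpow_mul_cexp_neg_mul {x : ℝ} (hx : 0 < x) (a z : ℂ) :
    ‖(x : ℂ) ^ a * cexp (-(z * x))‖ = x ^ a.re * rexp (-(z.re * x)) := by
  rw [norm_mul, Complex.norm_cpow_eq_rpow_re_of_pos hx, Complex.norm_exp]
  simp

theorem integrableOn_ofReal_cpow_mul_cexp_neg_mul {a z : ℂ} (ha : 0 < a.re) (hz : 0 < z.re) :
    IntegrableOn (fun x : ℝ => (x : ℂ) ^ (a - 1) * cexp (-(z * x))) (Ioi 0) := by
  have hmeas : AEStronglyMeasurable (fun x : ℝ => (x : ℂ) ^ (a - 1) * cexp (-(z * x)))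
      (volume.restrict (Ioi 0)) := by
    refine ContinuousOn.aestronglyMeasurable (fun x hx => ?_) measurableSet_Ioi
    exact ((Complex.continuousAt_ofReal_cpow_const x _ (Or.inr hx.ne')).mul
      (by fun_prop)).continuousWithinAt
  refine (integrableOn_rpow_mul_exp_neg_mul_rpow (s := a.re - 1) (p := 1) (by linarith)
    one_pos hz).mono' hmeas ((ae_restrict_iff' measurableSet_Ioi).mpr (.of_forall fun x hx => ?_))
  rw [norm_ofReal_cpow_mul_cexp_neg_mul hx, rpow_one, neg_mul, Complex.sub_re, Complex.one_re]

theorem differentiableOn_integral_cpow_mul_cexp_neg_mul {a : ℂ} (ha : 0 < a.re) :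
    DifferentiableOn ℂ (fun z : ℂ => ∫ x in Ioi (0 : ℝ), (x : ℂ) ^ (a - 1) * cexp (-(z * x)))
      {z | 0 < z.re} := by
  intro z₀ hz₀
  have hε : 0 < z₀.re / 2 := half_pos hz₀
  have hU : {z : ℂ | 0 < z.re} ∈ 𝓝 z₀ :=
    (isOpen_lt continuous_const Complex.continuous_re).mem_nhds hz₀
  have hs : {z : ℂ | z₀.re / 2 < z.re} ∈ 𝓝 z₀ :=
    (isOpen_lt continuous_const Complex.continuous_re).mem_nhds
      (show z₀.re / 2 < z₀.re from half_lt_self hz₀)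
  have hint {b z : ℂ} (hb : 0 < b.re) (hz : 0 < z.re) :
      IntegrableOn (fun x : ℝ => (x : ℂ) ^ b * cexp (-(z * x))) (Ioi 0) := by
    simpa using integrableOn_ofReal_cpow_mul_cexp_neg_mul (a := b + 1)
      (by rw [Complex.add_re, Complex.one_re]; linarith) hz
  refine (hasDerivAt_integral_of_dominated_loc_of_deriv_le (μ := volume.restrict (Ioi (0 : ℝ)))
    (F := fun z x => (x : ℂ) ^ (a - 1) * cexp (-(z * x)))
    (F' := fun z x => -((x : ℂ) ^ a * cexp (-(z * x))))
    (bound := fun x => ‖(x : ℂ) ^ a * cexp (-((z₀.re / 2 : ℝ) * x))‖) hs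
    (Filter.eventually_of_mem hU fun z (hz : 0 < z.re) =>
      (integrableOn_ofReal_cpow_mul_cexp_neg_mul ha hz).aestronglyMeasurable)
    (integrableOn_ofReal_cpow_mul_cexp_neg_mul ha hz₀) (hint ha hz₀).aestronglyMeasurable.neg
    ?_ (hint ha (by simpa using hε)).norm ?_).2.differentiableAt.differentiableWithinAt
  · refine (ae_restrict_iff' measurableSet_Ioi).mpr (.of_forall fun x (hx : 0 < x) z hz => ?_)
    rw [norm_neg, norm_ofReal_cpow_mul_cexp_neg_mul hx, norm_ofReal_cpow_mul_cexp_neg_mul hx,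
      Complex.ofReal_re]
    gcongr
    exact hz.le
  · refine (ae_restrict_iff' measurableSet_Ioi).mpr (.of_forall fun x (hx : 0 < x) z _ => ?_)
    have hpow : (x : ℂ) ^ a = (x : ℂ) ^ (a - 1) * x := by
      conv_lhs => rw [← sub_add_cancel a 1]
      rw [Complex.cpow_add _ _ (by exact_mod_cast hx.ne'), Complex.cpow_one]
    refine (((hasDerivAt_mul_const (x : ℂ)).neg.cexp).const_mul ((x : ℂ) ^ (a - 1))).congr_deriv ?_
    rw [hpow, Pi.neg_apply]
    ring

theorem eqOn_re_pos_of_eq_ofReal {f g : ℂ → ℂ} (hf : DifferentiableOn ℂ f {z | 0 < z.re})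
    (hg : DifferentiableOn ℂ g {z | 0 < z.re}) (h : ∀ r : ℝ, 0 < r → f r = g r) :
    EqOn f g {z | 0 < z.re} := by
  have hU : IsOpen {z : ℂ | 0 < z.re} := isOpen_lt continuous_const Complex.continuous_re
  have hreal : Tendsto ((↑) : ℝ → ℂ) (𝓝[>] (1 : ℝ)) (𝓝[≠] 1) :=
    tendsto_nhdsWithin_of_tendsto_nhds_of_eventually_within _
      (Complex.continuous_ofReal.continuousWithinAt.tendsto)
      (eventually_nhdsWithin_of_forall fun r (hr : 1 < r) =>
        mem_compl_singleton_iff.mpr (by exact_mod_cast hr.ne'))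
  refine (hf.analyticOnNhd hU).eqOn_of_preconnected_of_frequently_eq (hg.analyticOnNhd hU)
    (convex_halfSpace_re_gt 0).isPreconnected (z₀ := 1) (by simp) ?_
  exact hreal.frequently (eventually_nhdsWithin_of_forall (s := Ioi (1 : ℝ)) fun r (hr : 1 < r) =>
    h r (one_pos.trans hr)).frequently

theorem integral_cpow_mul_exp_neg_mul_Ioi_of_re_pos {a z : ℂ} (ha : 0 < a.re) (hz : 0 < z.re) :
    ∫ x in Ioi (0 : ℝ), (x : ℂ) ^ (a - 1) * cexp (-(z * x)) = (1 / z) ^ a * Complex.Gamma a := by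
  refine eqOn_re_pos_of_eq_ofReal (g := fun w => (1 / w) ^ a * Complex.Gamma a)
    (differentiableOn_integral_cpow_mul_cexp_neg_mul ha)
    (fun w (hw : 0 < w.re) => ?_) (fun r hr => Complex.integral_cpow_mul_exp_neg_mul_Ioi ha hr) hz
  have hw₀ : w ≠ 0 := fun h => by simp [h] at hw
  refine ((((differentiableAt_const 1).div differentiableAt_id hw₀).cpow_const ?_).mul_const
    _).differentiableWithinAt
  show 1 / w ∈ Complex.slitPlane
  rw [one_div, Complex.mem_slitPlane_iff, Complex.inv_re]
  exact .inl (div_pos hw (Complex.normSq_pos.mpr hw₀))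

theorem integral_rpow_mul_exp_neg_mul_mul_cos {a : ℝ} (ha : 0 < a) {z : ℂ} (hz : 0 < z.re) :
    ∫ x in Ioi (0 : ℝ), x ^ (a - 1) * rexp (-z.re * x) * Real.cos (z.im * x) =
      Real.Gamma a * ‖z‖ ^ (-a) * Real.cos (a * arg z) := by
  have ha' : 0 < (a : ℂ).re := by rwa [Complex.ofReal_re]
  have hre : ∀ x ∈ Ioi (0 : ℝ), x ^ (a - 1) * rexp (-z.re * x) * Real.cos (z.im * x) =
      ((x : ℂ) ^ ((a : ℂ) - 1) * cexp (-(z * x))).re := fun x (hx : 0 < x) => by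
    rw [← Complex.ofReal_one, ← Complex.ofReal_sub, ← Complex.ofReal_cpow hx.le,
      Complex.re_ofReal_mul, Complex.exp_re]
    simp [mul_assoc, Real.cos_neg]
  have harg : arg z ≠ π := fun h => (Complex.arg_eq_pi_iff.mp h).1.not_gt hz
  calc ∫ x in Ioi (0 : ℝ), x ^ (a - 1) * rexp (-z.re * x) * Real.cos (z.im * x)
      = (∫ x in Ioi (0 : ℝ), (x : ℂ) ^ ((a : ℂ) - 1) * cexp (-(z * x))).re := by
        rw [setIntegral_congr_fun measurableSet_Ioi hre]
        exact integral_re (integrableOn_ofReal_cpow_mul_cexp_neg_mul ha' hz)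
    _ = Real.Gamma a * ‖z‖ ^ (-a) * Real.cos (a * arg z) := by
        rw [integral_cpow_mul_exp_neg_mul_Ioi_of_re_pos ha' hz, Complex.Gamma_ofReal,
          Complex.re_mul_ofReal, Complex.cpow_ofReal_re, one_div, Complex.arg_inv, if_neg harg,
          norm_inv, Real.inv_rpow (norm_nonneg z), Real.rpow_neg (norm_nonneg z), neg_mul,
          Real.cos_neg, mul_comm (arg z)]
        ring

/-- For `p, q > 0` and `|t| < π/2`:
`∫_0^∞ x^{p-1} e^{-q x} cos(q x tan t) dx = (Γ(p)/q^p) cos^p(t) cos(p t)`. -/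
theorem integral_rpow_exp_cos (p q t : ℝ) (hp : 0 < p) (hq : 0 < q)
    (ht : |t| < π / 2) :
    ∫ x in Set.Ioi (0 : ℝ), x ^ (p - 1) * Real.exp (-q * x) * Real.cos (q * x * Real.tan t) =
      Real.Gamma p / q ^ p * Real.cos t ^ p * Real.cos (p * t) := by
  obtain ⟨ht₁, ht₂⟩ := abs_lt.mp ht
  have hcos : 0 < Real.cos t := Real.cos_pos_of_mem_Ioo ⟨ht₁, ht₂⟩
  have hr : 0 < q / Real.cos t := div_pos hq hcos
  set z : ℂ := ((q / Real.cos t : ℝ) : ℂ) * (Complex.cos t + Complex.sin t * I)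
  have hz_re : z.re = q := by
    simp [z, ← Complex.ofReal_cos, ← Complex.ofReal_sin, hcos.ne']
  have hz_im : z.im = q * Real.tan t := by
    simp [z, ← Complex.ofReal_cos, ← Complex.ofReal_sin, Real.tan_eq_sin_div_cos,
      div_mul_eq_mul_div, mul_div_assoc]
  have hz_norm : ‖z‖ = q / Real.cos t := by
    rw [norm_mul, Complex.norm_cos_add_sin_mul_I, mul_one, Complex.norm_of_nonneg hr.le]
  have hz_arg : arg z = t :=
    Complex.arg_mul_cos_add_sin_mul_I hr ⟨by linarith [pi_pos], by linarith [pi_pos]⟩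
  have hz_formula := integral_rpow_mul_exp_neg_mul_mul_cos hp (z := z) (hz_re ▸ hq)
  rw [hz_re, hz_im, hz_norm, hz_arg, Real.rpow_neg hr.le, Real.div_rpow hq.le hcos.le] at hz_formula
  convert hz_formula using 1
  · simp_rw [mul_right_comm q]
  · field_simp
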